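/- arXiv:1610.05365 — 2 statements merged into one kernel-verified Lean document; each statement's English description precedes it below -/
import Mathlib

section
/- For any two codimension 1 Abelian ideals V and V' of an almost Abelian Lie algebra L, there exists an automorphism φ of L with φ(V) = V'. -/
/-!
If `V₁ ≠ V₂`, the two hyperplanes span `L`, so `W = V₁ ∩ V₂` commutes with all of `L`, both
ideals being Abelian. Pick `e₁ ∈ V₁ \ V₂`, `e₂ ∈ V₂ \ V₁` and functionals `f₁, f₂` with kernels
`V₁, V₂` and `f₁ e₂ = f₂ e₁ = 1`. Then `L = W ⊕ F e₁ ⊕ F e₂` and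
`⁅x, y⁆ = (f₂ x f₁ y - f₂ y f₁ x) ⁅e₁, e₂⁆` with `⁅e₁, e₂⁆ ∈ W`. The linear involution exchanging
`e₁` and `e₂` and acting by `-1` on `W` changes the sign of both the coefficient and `⁅e₁, e₂⁆`,
so it is a Lie automorphism, and it maps `V₁ = ker f₁` onto `V₂ = ker f₂`.
-/

/-- A Lie algebra is almost Abelian if it is non-Abelian and possesses an Abelian ideal of
codimension 1 (as an `F`-vector subspace). -/
def IsAlmostAbelian (F L : Type*) [Field F] [LieRing L] [LieAlgebra F L] : Prop :=
  ¬IsLieAbelian L ∧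
    ∃ I : LieIdeal F L, IsLieAbelian I ∧ Module.rank F (L ⧸ I.toSubmodule) = 1

open Module

namespace Submodule

variable {K M : Type*} [Field K] [AddCommGroup M] [Module K M] {p : Submodule K M}

theorem isCoatom_of_rank_quotient_eq_one (hp : Module.rank K (M ⧸ p) = 1) : IsCoatom p :=
  isSimpleModule_iff_isCoatom.mp <| isSimpleModule_iff_finrank_eq_one.mpr <|
    finrank_eq_of_rank_eq (by simpa using hp)

theorem exists_dual_apply_eq_one_and_ker_eq (hp : IsCoatom p) {x : M} (hx : x ∉ p) :
    ∃ f : Dual K M, f x = 1 ∧ LinearMap.ker f = p := by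
  obtain ⟨g, hgx, hg⟩ := p.exists_dual_map_eq_bot_of_notMem hx inferInstance
  refine ⟨(g x)⁻¹ • g, inv_mul_cancel₀ hgx, (hp.le_iff_eq ?_).mp ?_⟩
  · exact fun h => by simpa [hgx] using (h ▸ mem_top : x ∈ LinearMap.ker ((g x)⁻¹ • g))
  · rw [LinearMap.ker_smul _ _ (inv_ne_zero hgx)]
    exact LinearMap.le_ker_iff_map.mpr hg

end Submodule

section SwapMap

variable {R M : Type*} [CommRing R] [AddCommGroup M] [Module R M]

/-- When `f₁ e₁ = f₂ e₂ = 0` and `f₁ e₂ = f₂ e₁ = 1`, this exchanges `e₁` and `e₂` and acts by `-1`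
on `ker f₁ ⊓ ker f₂`. -/
def swapMap (f₁ f₂ : Dual R M) (e₁ e₂ : M) : M →ₗ[R] M :=
  (f₁ + f₂).smulRight (e₁ + e₂) - LinearMap.id

variable {f₁ f₂ : Dual R M} {e₁ e₂ : M}

@[simp]
theorem swapMap_apply (x : M) :
    swapMap f₁ f₂ e₁ e₂ x = (f₁ x + f₂ x) • (e₁ + e₂) - x :=
  rfl

theorem apply_swapMap_left (h₁ : f₁ (e₁ + e₂) = 1) (x : M) :
    f₁ (swapMap f₁ f₂ e₁ e₂ x) = f₂ x := by
  simp only [swapMap_apply, map_sub, map_smul, h₁, smul_eq_mul, mul_one, add_sub_cancel_left]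

theorem apply_swapMap_right (h₂ : f₂ (e₁ + e₂) = 1) (x : M) :
    f₂ (swapMap f₁ f₂ e₁ e₂ x) = f₁ x := by
  simp only [swapMap_apply, map_sub, map_smul, h₂, smul_eq_mul, mul_one, add_sub_cancel_right]

theorem swapMap_involutive (h₁ : f₁ (e₁ + e₂) = 1) (h₂ : f₂ (e₁ + e₂) = 1) :
    Function.Involutive (swapMap f₁ f₂ e₁ e₂) := fun x => by
  rw [swapMap_apply (swapMap f₁ f₂ e₁ e₂ x), apply_swapMap_left h₁, apply_swapMap_right h₂,
    swapMap_apply, add_comm (f₂ x)]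
  abel

theorem swapMap_apply_of_mem_ker {w : M} (h₁ : f₁ w = 0) (h₂ : f₂ w = 0) :
    swapMap f₁ f₂ e₁ e₂ w = -w := by
  simp [h₁, h₂]

theorem map_swapMap_ker (h₁ : f₁ (e₁ + e₂) = 1) (h₂ : f₂ (e₁ + e₂) = 1) :
    (LinearMap.ker f₁).map (swapMap f₁ f₂ e₁ e₂) = LinearMap.ker f₂ := by
  have hker : LinearMap.ker f₁ = (LinearMap.ker f₂).comap (swapMap f₁ f₂ e₁ e₂) := by
    rw [← LinearMap.ker_comp]
    exact congrArg LinearMap.ker (LinearMap.ext (apply_swapMap_right h₂)).symm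
  rw [hker, Submodule.map_comap_eq_of_surjective (swapMap_involutive h₁ h₂).surjective]

end SwapMap

section Lie

variable {R L : Type*} [CommRing R] [LieRing L] [LieAlgebra R L]

theorem LieIdeal.lie_eq_zero_of_mem {I : LieIdeal R L} [IsLieAbelian I] {x y : L} (hx : x ∈ I)
    (hy : y ∈ I) : ⁅x, y⁆ = 0 :=
  congrArg Subtype.val (trivial_lie_zero I I ⟨x, hx⟩ ⟨y, hy⟩)

theorem LieIdeal.inf_le_center_of_sup_eq_top {V₁ V₂ : LieIdeal R L} [IsLieAbelian V₁]
    [IsLieAbelian V₂] (h : V₁ ⊔ V₂ = ⊤) : V₁ ⊓ V₂ ≤ LieAlgebra.center R L := by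
  intro w ⟨hw₁, hw₂⟩
  rw [LieModule.mem_maxTrivSubmodule]
  intro x
  obtain ⟨a, ha, b, hb, rfl⟩ := LieSubmodule.mem_sup _ _ _ |>.mp (h ▸ LieSubmodule.mem_top x)
  rw [add_lie, ← lie_skew, lie_eq_zero_of_mem hw₁ ha, ← lie_skew b, lie_eq_zero_of_mem hw₂ hb]
  simp

variable {f₁ f₂ : Dual R L} {e₁ e₂ : L}

theorem lie_eq_smul_lie (h₁₁ : f₁ e₁ = 0) (h₁₂ : f₁ e₂ = 1) (h₂₁ : f₂ e₁ = 1) (h₂₂ : f₂ e₂ = 0)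
    (hcentral : LinearMap.ker f₁ ⊓ LinearMap.ker f₂ ≤ (LieAlgebra.center R L).toSubmodule)
    (x y : L) : ⁅x, y⁆ = (f₂ x * f₁ y - f₂ y * f₁ x) • ⁅e₁, e₂⁆ := by
  have hdecomp (z : L) : ∃ u, (∀ v : L, ⁅u, v⁆ = 0) ∧ z = u + (f₂ z • e₁ + f₁ z • e₂) := by
    refine ⟨z - (f₂ z • e₁ + f₁ z • e₂), fun v => ?_, by abel⟩
    have hu : z - (f₂ z • e₁ + f₁ z • e₂) ∈ LieAlgebra.center R L :=
      hcentral ⟨by simp [h₁₁, h₁₂], by simp [h₂₁, h₂₂]⟩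
    rw [← lie_skew, (LieModule.mem_maxTrivSubmodule R L L _).mp hu, neg_zero]
  obtain ⟨u, hu, hx⟩ := hdecomp x
  obtain ⟨v, hv, hy⟩ := hdecomp y
  conv_lhs => rw [hx, hy]
  simp only [add_lie, lie_add, hu, ← lie_skew _ v, hv, lie_smul, smul_lie, lie_self,
    ← lie_skew e₂ e₁]
  module

theorem swapMap_lie (h₁₁ : f₁ e₁ = 0) (h₁₂ : f₁ e₂ = 1) (h₂₁ : f₂ e₁ = 1) (h₂₂ : f₂ e₂ = 0)
    (hcentral : LinearMap.ker f₁ ⊓ LinearMap.ker f₂ ≤ (LieAlgebra.center R L).toSubmodule)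
    (hc₁ : f₁ ⁅e₁, e₂⁆ = 0) (hc₂ : f₂ ⁅e₁, e₂⁆ = 0) (x y : L) :
    swapMap f₁ f₂ e₁ e₂ ⁅x, y⁆ = ⁅swapMap f₁ f₂ e₁ e₂ x, swapMap f₁ f₂ e₁ e₂ y⁆ := by
  have h₁ : f₁ (e₁ + e₂) = 1 := by simp [h₁₁, h₁₂]
  have h₂ : f₂ (e₁ + e₂) = 1 := by simp [h₂₁, h₂₂]
  rw [lie_eq_smul_lie h₁₁ h₁₂ h₂₁ h₂₂ hcentral x y,
    lie_eq_smul_lie h₁₁ h₁₂ h₂₁ h₂₂ hcentral (swapMap f₁ f₂ e₁ e₂ x), map_smul,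
    swapMap_apply_of_mem_ker hc₁ hc₂, apply_swapMap_left h₁, apply_swapMap_left h₁,
    apply_swapMap_right h₂, apply_swapMap_right h₂, smul_neg, ← neg_smul]
  congr 1
  ring

theorem exists_lieEquiv_map_ker_eq (h₁₁ : f₁ e₁ = 0) (h₁₂ : f₁ e₂ = 1) (h₂₁ : f₂ e₁ = 1)
    (h₂₂ : f₂ e₂ = 0)
    (hcentral : LinearMap.ker f₁ ⊓ LinearMap.ker f₂ ≤ (LieAlgebra.center R L).toSubmodule)
    (hc₁ : f₁ ⁅e₁, e₂⁆ = 0) (hc₂ : f₂ ⁅e₁, e₂⁆ = 0) :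
    ∃ φ : L ≃ₗ⁅R⁆ L, (LinearMap.ker f₁).map φ.toLieHom.toLinearMap = LinearMap.ker f₂ := by
  have h₁ : f₁ (e₁ + e₂) = 1 := by simp [h₁₁, h₁₂]
  have h₂ : f₂ (e₁ + e₂) = 1 := by simp [h₂₁, h₂₂]
  have hinv := swapMap_involutive h₁ h₂
  exact ⟨{ swapMap f₁ f₂ e₁ e₂ with
    map_lie' := swapMap_lie h₁₁ h₁₂ h₂₁ h₂₂ hcentral hc₁ hc₂ _ _
    invFun := swapMap f₁ f₂ e₁ e₂, left_inv := hinv, right_inv := hinv },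
    map_swapMap_ker h₁ h₂⟩

end Lie

theorem LieIdeal.exists_lieEquiv_map_eq {F L : Type*} [Field F] [LieRing L] [LieAlgebra F L]
    {V₁ V₂ : LieIdeal F L} [IsLieAbelian V₁] [IsLieAbelian V₂] (hV₁ : IsCoatom V₁.toSubmodule)
    (hV₂ : IsCoatom V₂.toSubmodule) :
    ∃ φ : L ≃ₗ⁅F⁆ L, V₁.toSubmodule.map φ.toLieHom.toLinearMap = V₂.toSubmodule := by
  by_cases heq : V₁.toSubmodule = V₂.toSubmodule
  · exact ⟨LieEquiv.refl, heq ▸ Submodule.map_id _⟩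
  obtain ⟨e₁, he₁V₁, he₁V₂⟩ :=
    SetLike.not_le_iff_exists.mp (mt (hV₁.le_iff_eq hV₂.1).mp (Ne.symm heq))
  obtain ⟨e₂, he₂V₂, he₂V₁⟩ := SetLike.not_le_iff_exists.mp (mt (hV₂.le_iff_eq hV₁.1).mp heq)
  obtain ⟨f₁, h₁₂, hf₁⟩ := Submodule.exists_dual_apply_eq_one_and_ker_eq hV₁ he₂V₁
  obtain ⟨f₂, h₂₁, hf₂⟩ := Submodule.exists_dual_apply_eq_one_and_ker_eq hV₂ he₁V₂
  have hf₁_eq_zero (x : L) : f₁ x = 0 ↔ x ∈ V₁ := by rw [← LinearMap.mem_ker, hf₁]; rfl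
  have hf₂_eq_zero (x : L) : f₂ x = 0 ↔ x ∈ V₂ := by rw [← LinearMap.mem_ker, hf₂]; rfl
  have hsup : V₁ ⊔ V₂ = ⊤ := by
    rw [← LieSubmodule.toSubmodule_inj, LieSubmodule.sup_toSubmodule, LieSubmodule.top_toSubmodule]
    exact hV₁.sup_eq_top_of_ne hV₂ heq
  have hcentral : LinearMap.ker f₁ ⊓ LinearMap.ker f₂ ≤ (LieAlgebra.center F L).toSubmodule := by
    rw [hf₁, hf₂, ← LieSubmodule.inf_toSubmodule, LieSubmodule.toSubmodule_le_toSubmodule]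
    exact inf_le_center_of_sup_eq_top hsup
  rw [← hf₁, ← hf₂]
  exact exists_lieEquiv_map_ker_eq ((hf₁_eq_zero e₁).mpr he₁V₁) h₁₂ h₂₁
    ((hf₂_eq_zero e₂).mpr he₂V₂) hcentral ((hf₁_eq_zero _).mpr (lie_mem_left F L V₁ e₁ e₂ he₁V₁))
    ((hf₂_eq_zero _).mpr (lie_mem_right F L V₂ e₁ e₂ he₂V₂))

theorem stmt14_general (F L : Type*) [Field F] [LieRing L] [LieAlgebra F L]
    (V₁ V₂ : LieIdeal F L)
    (h₁ : IsLieAbelian V₁) (hcod₁ : Module.rank F (L ⧸ V₁.toSubmodule) = 1)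
    (h₂ : IsLieAbelian V₂) (hcod₂ : Module.rank F (L ⧸ V₂.toSubmodule) = 1) :
    ∃ φ : L ≃ₗ⁅F⁆ L,
      Submodule.map φ.toLieHom.toLinearMap V₁.toSubmodule = V₂.toSubmodule :=
  LieIdeal.exists_lieEquiv_map_eq (Submodule.isCoatom_of_rank_quotient_eq_one hcod₁)
    (Submodule.isCoatom_of_rank_quotient_eq_one hcod₂)

/-- Any two codimension 1 Abelian ideals of an almost Abelian Lie algebra are related by an
automorphism. -/
theorem stmt14 (F L : Type*) [Field F] [LieRing L] [LieAlgebra F L]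
    (hL : IsAlmostAbelian F L) (V₁ V₂ : LieIdeal F L)
    (h₁ : IsLieAbelian V₁) (hcod₁ : Module.rank F (L ⧸ V₁.toSubmodule) = 1)
    (h₂ : IsLieAbelian V₂) (hcod₂ : Module.rank F (L ⧸ V₂.toSubmodule) = 1) :
    ∃ φ : L ≃ₗ⁅F⁆ L,
      Submodule.map φ.toLieHom.toLinearMap V₁.toSubmodule = V₂.toSubmodule :=
  stmt14_general F L V₁ V₂ h₁ hcod₁ h₂ hcod₂
end

section
/- Two almost Abelian Lie algebras L = F e₀ ⋉ V and L' = F e₀' ⋉ V' are isomorphic as Lie algebras if and only if there exist λ ∈ F* and a linear isomorphism φ : V → V' such that φ ∘ ad_{e₀} = λ · ad_{e₀'} ∘ φ. -/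
variable {F : Type*} [Field F] {V : Type*} [AddCommGroup V] [Module F V]

/-- The almost Abelian Lie algebra `F e₀ ⋉ V` determined by the operator `T = ad_{e₀}|_V`:
the underlying vector space is `F × V`, with bracket `[(t,v),(s,w)] = (0, t • T w - s • T v)`. -/
def AA (F V : Type*) [Field F] [AddCommGroup V] [Module F V] (_T : Module.End F V) : Type _ :=
  F × V

namespace AA

variable {T : Module.End F V}

instance : AddCommGroup (AA F V T) := inferInstanceAs (AddCommGroup (F × V))
instance : Module F (AA F V T) := inferInstanceAs (Module F (F × V))

instance : LieRing (AA F V T) where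
  bracket := fun (x y : F × V) => (((0 : F), x.1 • T y.2 - y.1 • T x.2) : F × V)
  add_lie := by
    rintro ⟨a, u⟩ ⟨b, v⟩ ⟨c, w⟩
    show (((0 : F), (a + b) • T w - c • T (u + v)) : F × V)
      = (((0 : F), a • T w - c • T u) : F × V) + (((0 : F), b • T w - c • T v) : F × V)
    ext
    · simp
    · show (a + b) • T w - c • T (u + v) = (a • T w - c • T u) + (b • T w - c • T v)
      simp only [map_add, smul_add, add_smul]
      module
  lie_add := by
    rintro ⟨a, u⟩ ⟨b, v⟩ ⟨c, w⟩
    show (((0 : F), a • T (v + w) - (b + c) • T u) : F × V)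
      = (((0 : F), a • T v - b • T u) : F × V) + (((0 : F), a • T w - c • T u) : F × V)
    ext
    · simp
    · show a • T (v + w) - (b + c) • T u = (a • T v - b • T u) + (a • T w - c • T u)
      simp only [map_add, smul_add, add_smul]
      module
  lie_self := by
    rintro ⟨a, u⟩
    show (((0 : F), a • T u - a • T u) : F × V) = (0 : F × V)
    ext
    · simp
    · show a • T u - a • T u = (0 : V)
      simp
  leibniz_lie := by
    rintro ⟨a, u⟩ ⟨b, v⟩ ⟨c, w⟩
    show (((0 : F), a • T (b • T w - c • T v) - (0 : F) • T u) : F × V)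
      = (((0 : F), (0 : F) • T w - c • T (a • T v - b • T u)) : F × V)
        + (((0 : F), b • T (a • T w - c • T u) - (0 : F) • T v) : F × V)
    ext
    · simp
    · show a • T (b • T w - c • T v) - (0 : F) • T u
        = ((0 : F) • T w - c • T (a • T v - b • T u)) + (b • T (a • T w - c • T u) - (0 : F) • T v)
      simp only [map_sub, map_smul, zero_smul, smul_sub, smul_smul]
      module

instance : LieAlgebra F (AA F V T) where
  lie_smul := by
    rintro r ⟨a, u⟩ ⟨b, v⟩
    show (((0 : F), a • T (r • v) - (r • b) • T u) : F × V)
      = r • (((0 : F), a • T v - b • T u) : F × V)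
    ext
    · simp
    · show a • T (r • v) - (r • b) • T u = r • (a • T v - b • T u)
      simp only [map_smul, smul_sub, smul_smul, smul_eq_mul]
      module

/-- The distinguished element `e₀`. -/
def e0 (T : Module.End F V) : AA F V T := ((1, 0) : F × V)

/-- The inclusion of the Abelian ideal `V` into `F e₀ ⋉ V`. -/
def incl (T : Module.End F V) : V →ₗ[F] AA F V T where
  toFun v := ((0, v) : F × V)
  map_add' u v := by
    show (((0 : F), u + v) : F × V) = (((0 : F), u) : F × V) + (((0 : F), v) : F × V)
    ext <;> simp
  map_smul' r v := by
    show (((0 : F), r • v) : F × V) = r • (((0 : F), v) : F × V)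
    ext <;> simp

@[simp] lemma bracket_e0_incl (v : V) : ⁅e0 T, incl T v⁆ = incl T (T v) := by
  show (((0 : F), (1 : F) • T v - (0 : F) • T (0 : V)) : F × V) = (((0 : F), T v) : F × V)
  ext <;> simp

end AA

/-!
A Lie isomorphism `e : F e₀ ⋉ V ≃ F e₀' ⋉ V'` carries the abelian ideal `V` onto a codimension-one
abelian ideal `A`. If `A = V'`, then `e` restricts to `φ : V ≃ V'`, and `e ⁅e₀, v⁆ = ⁅e e₀, e v⁆`
gives `φ ∘ T = λ • T' ∘ φ`, where `λ` is the `e₀'`-coordinate of `e e₀`. Otherwise pick `p ∈ A`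
with `e₀'`-coordinate `1`. On `V'` we have `T' = ad p`; as `ad p` kills `A` and
`F e₀' ⋉ V' = F • e e₀ + A`, every `T' y` is a multiple of `z = ⁅p, e e₀⁆`, and `T' z = 0` since
`z ∈ A`. Thus `T' = μ ⊗ z` with `μ z = 0`, and a rotation of `F e₀' ⋉ V'` in the plane of `e₀'`
and a preimage of `z` moves `A` onto `V'`, reducing to the first case.
-/

namespace AA

variable {V' : Type*} [AddCommGroup V'] [Module F V'] {T : Module.End F V} {T' : Module.End F V'}

def fst : AA F V T →ₗ[F] F := LinearMap.fst F F V

def snd : AA F V T →ₗ[F] V := LinearMap.snd F F V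

def mk (t : F) (v : V) : AA F V T := (t, v)

@[simp] lemma fst_mk (t : F) (v : V) : fst (mk t v : AA F V T) = t := rfl
@[simp] lemma snd_mk (t : F) (v : V) : snd (mk t v : AA F V T) = v := rfl

@[ext] lemma ext {x y : AA F V T} (h₁ : fst x = fst y) (h₂ : snd x = snd y) : x = y :=
  Prod.ext h₁ h₂

@[simp] lemma fst_e0 : fst (e0 T) = 1 := rfl
@[simp] lemma snd_e0 : snd (e0 T) = 0 := rfl
@[simp] lemma fst_incl (v : V) : fst (incl T v) = 0 := rfl
@[simp] lemma snd_incl (v : V) : snd (incl T v) = v := rfl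
@[simp] lemma fst_lie (x y : AA F V T) : fst ⁅x, y⁆ = 0 := rfl
@[simp] lemma snd_lie (x y : AA F V T) : snd ⁅x, y⁆ = fst x • T (snd y) - fst y • T (snd x) := rfl

lemma fst_smul_e0_add_incl (x : AA F V T) : fst x • e0 T + incl T (snd x) = x := by
  ext <;> simp

lemma incl_snd_of_fst_eq_zero {x : AA F V T} (hx : fst x = 0) : incl T (snd x) = x := by
  ext <;> simp [hx]

lemma incl_injective : Function.Injective (incl T) := fun _ _ h => congrArg snd h

lemma lie_incl (x : AA F V T) (v : V) : ⁅x, incl T v⁆ = incl T (fst x • T v) := by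
  ext <;> simp

lemma lie_eq_incl_of_fst_eq_one {p : AA F V T} (hp : fst p = 1) (x : AA F V T) :
    ⁅p, x⁆ = incl T (T (snd x - fst x • snd p)) := by
  ext <;> simp [hp]

def lieEquivOfConj {l : F} (hl : l ≠ 0) (φ : V ≃ₗ[F] V') (h : ∀ v, φ (T v) = l • T' (φ v)) :
    AA F V T ≃ₗ⁅F⁆ AA F V' T' where
  toFun x := mk (l * fst x) (φ (snd x))
  invFun y := mk (l⁻¹ * fst y) (φ.symm (snd y))
  map_add' x y := by ext <;> simp [mul_add]
  map_smul' c x := by ext <;> simp [mul_left_comm]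
  map_lie' {x y} := by ext <;> simp [h, smul_smul, mul_comm]
  left_inv x := by ext <;> simp [hl]
  right_inv y := by ext <;> simp [hl]

/-- With `μ b = 1`, this fixes `ker μ` pointwise and maps `e₀' ↦ c • e₀' + b`, `b ↦ -e₀'`; the
bracket sees `span {e₀', b}` only through `⁅e₀', b⁆ = T' b`, which this unimodular map preserves. -/
def rotation (μ : Module.Dual F V') (b : V') (c : F) (hμ : ∀ y, T' y = μ y • T' b)
    (hb : μ b = 1) (hμb : μ (T' b) = 0) : AA F V' T' ≃ₗ⁅F⁆ AA F V' T' where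
  toFun x := mk (c * fst x - μ (snd x)) (fst x • b + snd x - μ (snd x) • b)
  invFun y := mk (μ (snd y)) (snd y + ((c - 1) * μ (snd y) - fst y) • b)
  map_add' x y := by
    ext
    · simp only [fst_mk, map_add]; ring
    · simp only [snd_mk, map_add]; module
  map_smul' r x := by
    ext
    · simp only [fst_mk, map_smul, smul_eq_mul, RingHom.id_apply]; ring
    · simp only [snd_mk, map_smul, smul_eq_mul, RingHom.id_apply]; module
  map_lie' {x y} := by
    have hμT : ∀ y, μ (T' y) = 0 := fun y => by rw [hμ, map_smul, hμb, smul_zero]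
    ext
    · simp [hμT]
    · simp only [fst_mk, snd_mk, fst_lie, snd_lie, map_sub, map_smul, map_add, smul_eq_mul, hμT]
      rw [hμ (snd x), hμ (snd y)]
      module
  left_inv x := by
    ext
    · simp only [fst_mk, snd_mk, map_add, map_sub, map_smul, smul_eq_mul, hb]; ring
    · simp only [fst_mk, snd_mk, map_add, map_sub, map_smul, smul_eq_mul, hb]; module
  right_inv y := by
    ext
    · simp only [fst_mk, snd_mk, map_add, map_smul, smul_eq_mul, hb]; ring
    · simp only [fst_mk, snd_mk, map_add, map_smul, smul_eq_mul, hb]; module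

@[simp] lemma fst_rotation (μ : Module.Dual F V') (b : V') (c : F) (hμ : ∀ y, T' y = μ y • T' b)
    (hb : μ b = 1) (hμb : μ (T' b) = 0) (x : AA F V' T') :
    fst (rotation μ b c hμ hb hμb x) = c * fst x - μ (snd x) :=
  rfl

section Restrict

variable (e : AA F V T ≃ₗ⁅F⁆ AA F V' T')

lemma fst_apply_of_fst_incl_eq_zero (h₀ : ∀ v, fst (e (incl T v)) = 0) (x : AA F V T) :
    fst (e x) = fst x * fst (e (e0 T)) := by
  conv_lhs => rw [← fst_smul_e0_add_incl x]
  simp [h₀]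

lemma exists_conj_of_fst_incl_eq_zero (h₀ : ∀ v, fst (e (incl T v)) = 0) :
    ∃ (l : F) (φ : V ≃ₗ[F] V'), l ≠ 0 ∧ ∀ v, φ (T v) = l • T' (φ v) := by
  have hfst := fst_apply_of_fst_incl_eq_zero e h₀
  set l := fst (e (e0 T))
  have hl : l ≠ 0 := fun hl₀ => by simpa [hl₀] using hfst (e.symm (e0 T'))
  let g : V →ₗ[F] V' := snd ∘ₗ e.toLinearEquiv.toLinearMap ∘ₗ incl T
  have hg (v : V) : incl T' (g v) = e (incl T v) := incl_snd_of_fst_eq_zero (h₀ v)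
  have hg_bij : Function.Bijective g := by
    refine ⟨fun u v huv => incl_injective (EquivLike.injective e ?_), fun y => ?_⟩
    · rw [← hg, ← hg, huv]
    · obtain ⟨x, hx⟩ := EquivLike.surjective e (incl T' y)
      have hx₁ : fst x = 0 := by simpa [hx, hl] using hfst x
      refine ⟨snd x, incl_injective (T := T') ?_⟩
      rw [hg, incl_snd_of_fst_eq_zero hx₁, hx]
  refine ⟨l, LinearEquiv.ofBijective g hg_bij, hl, fun v => ?_⟩
  simpa [g, h₀] using congrArg snd (e.map_lie (e0 T) (incl T v))

end Restrict

section Transverse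

variable (e : AA F V T ≃ₗ⁅F⁆ AA F V' T') (v₀ : V)

lemma lie_apply_incl_apply (x : AA F V T) :
    ⁅e (incl T v₀), e x⁆ = fst x • ⁅e (incl T v₀), e (e0 T)⁆ := by
  conv_lhs => rw [← fst_smul_e0_add_incl x]
  rw [map_add, map_smul, lie_add, lie_smul, ← e.map_lie, ← e.map_lie, lie_incl]
  simp

variable {v₀} (hv₀ : fst (e (incl T v₀)) = 1)
include hv₀

lemma apply_snd_apply_incl (v : V) :
    T' (snd (e (incl T v))) = fst (e (incl T v)) • T' (snd (e (incl T v₀))) := by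
  have h := lie_apply_incl_apply e v₀ (incl T v)
  rw [lie_eq_incl_of_fst_eq_one hv₀, fst_incl, zero_smul] at h
  simpa [sub_eq_zero] using congrArg snd h

lemma apply_eq_smul_snd_lie (y : V') :
    T' y = fst (e.symm (incl T' y)) • snd ⁅e (incl T v₀), e (e0 T)⁆ := by
  have h : incl T' (T' y) = fst (e.symm (incl T' y)) • ⁅e (incl T v₀), e (e0 T)⁆ := by
    rw [← lie_apply_incl_apply, e.apply_symm_apply, lie_incl, hv₀, one_smul]
  simpa using congrArg snd h

lemma apply_snd_lie_eq_zero : T' (snd ⁅e (incl T v₀), e (e0 T)⁆) = 0 := by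
  have h : ⁅e (incl T v₀), ⁅e (incl T v₀), e (e0 T)⁆⁆ = 0 := by
    rw [← e.map_lie, lie_apply_incl_apply, fst_lie, zero_smul]
  rw [← incl_snd_of_fst_eq_zero (fst_lie (e (incl T v₀)) (e (e0 T))), lie_incl, hv₀,
    one_smul] at h
  simpa using congrArg snd h

end Transverse

lemma exists_lieEquiv_fst_incl_eq_zero (hT' : T' ≠ 0) (e : AA F V T ≃ₗ⁅F⁆ AA F V' T') :
    ∃ e' : AA F V T ≃ₗ⁅F⁆ AA F V' T', ∀ v, fst (e' (incl T v)) = 0 := by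
  by_cases h₀ : ∀ v, fst (e (incl T v)) = 0
  · exact ⟨e, h₀⟩
  obtain ⟨v₁, hv₁⟩ := not_forall.mp h₀
  set v₀ := (fst (e (incl T v₁)))⁻¹ • v₁
  have hv₀ : fst (e (incl T v₀)) = 1 := by simp [v₀, hv₁]
  set p := e (incl T v₀)
  set b := snd (e (e0 T)) - fst (e (e0 T)) • snd p
  have hb : T' b = snd ⁅p, e (e0 T)⁆ := by simp [lie_eq_incl_of_fst_eq_one hv₀, b]
  have hTb : T' b ≠ 0 := fun h => hT' <| LinearMap.ext fun y => by
    rw [apply_eq_smul_snd_lie e hv₀ y, ← hb, h, smul_zero, LinearMap.zero_apply]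
  obtain ⟨ψ, hψ⟩ := Module.Projective.exists_dual_eq_one F hTb
  have hμ (y : V') : T' y = (ψ ∘ₗ T') y • T' b := by
    rw [LinearMap.comp_apply, apply_eq_smul_snd_lie e hv₀ y, ← hb, map_smul, hψ, smul_eq_mul,
      mul_one]
  have hμb : (ψ ∘ₗ T') (T' b) = 0 := by
    rw [LinearMap.comp_apply, hb, apply_snd_lie_eq_zero e hv₀, map_zero]
  refine ⟨e.trans (rotation (ψ ∘ₗ T') b (ψ (T' (snd p))) hμ hψ hμb), fun v => ?_⟩
  simp [p, apply_snd_apply_incl e hv₀ v, mul_comm]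

end AA

theorem stmt15_general (F V V' : Type*) [Field F] [AddCommGroup V] [Module F V]
    [AddCommGroup V'] [Module F V'] (T : Module.End F V) (T' : Module.End F V')
    (hT' : T' ≠ 0) :
    Nonempty (AA F V T ≃ₗ⁅F⁆ AA F V' T') ↔
      ∃ (l : F) (φ : V ≃ₗ[F] V'), l ≠ 0 ∧ ∀ v : V, φ (T v) = l • T' (φ v) := by
  constructor
  · rintro ⟨e⟩
    obtain ⟨e', he'⟩ := AA.exists_lieEquiv_fst_incl_eq_zero hT' e
    exact AA.exists_conj_of_fst_incl_eq_zero e' he'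
  · rintro ⟨l, φ, hl, h⟩
    exact ⟨AA.lieEquivOfConj hl φ h⟩

/-- Two almost Abelian Lie algebras `F e₀ ⋉ V` and `F e₀' ⋉ V'` are isomorphic iff there are
`λ ∈ F*` and a linear isomorphism `φ : V → V'` with `φ ∘ ad_{e₀} = λ • ad_{e₀'} ∘ φ`. -/
theorem stmt15 (F V V' : Type*) [Field F] [AddCommGroup V] [Module F V]
    [AddCommGroup V'] [Module F V'] (T : Module.End F V) (T' : Module.End F V')
    (hT : T ≠ 0) (hT' : T' ≠ 0) :
    Nonempty (AA F V T ≃ₗ⁅F⁆ AA F V' T') ↔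
      ∃ (l : F) (φ : V ≃ₗ[F] V'), l ≠ 0 ∧ ∀ v : V, φ (T v) = l • T' (φ v) :=
  stmt15_general F V V' T T' hT'
end
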